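/- arXiv:2402.08340 — 3 statements merged into one kernel-verified Lean document; each statement's English description precedes it below -/
import Mathlib

section
/- Let a, r ∈ ℕ and let n ≥ ra(a+1)/2 be an integer. There exists a polynomial 𝒫_{a,r,n} ∈ ℚ[x] of degree exactly n − ra(a+1)/2, with leading coefficient 1/(n − ra(a+1)/2)!, such that c_{a,k,r}(n) = 𝒫_{a,r,n}(k) for every k ∈ ℤ. -/
/-!
Over `ℚ`, the binomial series gives `(1 - q^m)^(-k) = ∑ⱼ multichoose(k, j) q^(mj)` for every
`k ∈ ℤ`, and `multichoose(k, j) = k(k+1)⋯(k+j-1)/j!` is a polynomial in `k` of degree `j`.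
So every coefficient of `𝒜_{a,k,r}` is the value at `k` of a coefficient of a power series
over `ℚ[x]`. For the series involved, the coefficient of `q^N` has degree at most `N`, and the
"diagonal" coefficients `[x^N q^N]` are multiplicative. In `(1 - q^m)^(-x)` the diagonal part is
`exp q` for `m = 1` and `1` for `m ≥ 2`, so the degree `d = n - r a(a+1)/2` is reached only by
the tuple `(1, 2, …, a)`, with leading coefficient `[q^d] exp q = 1/d!`.
-/

open PowerSeries Finset
open scoped Classical

noncomputable section

/-- `(1 - q^n)^(-k)` in `ℚ⟦q⟧`, for `k : ℤ` (for negative `k` this is the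
power `(1 - q^n)^{|k|}`). -/
def dFac (n : ℕ) (k : ℤ) : PowerSeries ℚ :=
  if 0 ≤ k then ((1 - (X : PowerSeries ℚ) ^ n)⁻¹) ^ k.toNat
  else (1 - (X : PowerSeries ℚ) ^ n) ^ (-k).toNat

/-- Strictly increasing `a`-tuples `1 ≤ n₁ < n₂ < ⋯ < n_a ≤ N`. -/
def strictTuples (a N : ℕ) : Finset (Fin a → ℕ) :=
  (Fintype.piFinset fun _ : Fin a => Finset.Icc 1 N).filter fun f => StrictMono f

/-- The coefficient `c_{a,k,r}(N)` of `q^N` in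
`𝒜_{a,k,r}(q) = Σ_{1≤n₁<⋯<n_a} q^{r(n₁+⋯+n_a)} / ∏_j (1-q^{n_j})^k`.
Since `r ≥ 1`, tuples containing an entry `> N` contribute `0` to the coefficient of `q^N`,
so the (q-adically convergent) infinite sum can be truncated to entries in `[1, N]`. -/
def Acoeff (a : ℕ) (k : ℤ) (r : ℕ) (N : ℕ) : ℚ :=
  ∑ f ∈ strictTuples a N,
    PowerSeries.coeff N ((X : PowerSeries ℚ) ^ (r * ∑ j, f j) * ∏ j, dFac (f j) k)

lemma coeff_rescale_binomialSeries_neg (x : ℚ) (j : ℕ) :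
    coeff j (rescale (-1) (binomialSeries ℚ (-x))) = Ring.multichoose x j := by
  rw [coeff_rescale, binomialSeries_coeff, Ring.choose_neg', Int.negOnePow_def]
  simp [Units.smul_def, ← mul_assoc, ← mul_pow]

lemma dFac_eq_expand (n : ℕ) (hn : n ≠ 0) (k : ℤ) :
    dFac n k = expand n hn (rescale (-1) (binomialSeries ℚ (-k : ℚ))) := by
  set B : ℚ → ℚ⟦X⟧ := fun x => expand n hn (rescale (-1) (binomialSeries ℚ x)) with hB
  have B_add : ∀ x y, B (x + y) = B x * B y := fun x y => by simp [hB]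
  have B_natCast : ∀ t : ℕ, B t = (1 - X ^ n) ^ t := fun t => by
    simp [hB, sub_eq_add_neg]
  have B_neg_one : B (-1) = (1 - X ^ n)⁻¹ := by
    rw [PowerSeries.eq_inv_iff_mul_eq_one (by simp [hn]), ← pow_one (1 - X ^ n), ← Nat.cast_one,
      ← B_natCast, ← B_add]
    simp [hB]
  have B_neg_natCast : ∀ t : ℕ, B (-t) = (1 - X ^ n)⁻¹ ^ t := fun t => by
    induction t with
    | zero => simp [hB]
    | succ t ih => rw [pow_succ, ← ih, ← B_neg_one, ← B_add]; push_cast; ring_nf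
  obtain ⟨t, rfl | rfl⟩ := Int.eq_nat_or_neg k
  · simpa [dFac] using (B_neg_natCast t).symm
  · rcases t.eq_zero_or_pos with rfl | ht
    · simp [dFac]
    · rw [dFac, if_neg (by omega), neg_neg, Int.toNat_natCast, Int.cast_neg, neg_neg,
        Int.cast_natCast]
      exact (B_natCast t).symm

def multichoosePoly (j : ℕ) : Polynomial ℚ := (j.factorial : ℚ)⁻¹ • ascPochhammer ℚ j

lemma eval_multichoosePoly (j : ℕ) (x : ℚ) :
    (multichoosePoly j).eval x = Ring.multichoose x j := by
  rw [multichoosePoly, Polynomial.eval_smul, ← Polynomial.ascPochhammer_smeval_eq_eval,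
    ← Ring.factorial_nsmul_multichoose_eq_ascPochhammer, nsmul_eq_mul, smul_eq_mul,
    inv_mul_cancel_left₀ (by positivity)]

lemma natDegree_multichoosePoly (j : ℕ) : (multichoosePoly j).natDegree = j := by
  rw [multichoosePoly, Polynomial.natDegree_smul _ (inv_ne_zero (by positivity)),
    ascPochhammer_natDegree]

lemma coeff_multichoosePoly_self (j : ℕ) :
    (multichoosePoly j).coeff j = (j.factorial : ℚ)⁻¹ := by
  have h := (monic_ascPochhammer ℚ j).coeff_natDegree
  rw [ascPochhammer_natDegree] at h
  rw [multichoosePoly, Polynomial.coeff_smul, h, smul_eq_mul, mul_one]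

namespace PowerSeries

variable {R : Type*} [CommSemiring R]

def NatDegreeCoeffLE (F : PowerSeries (Polynomial R)) : Prop :=
  ∀ N, (coeff N F).natDegree ≤ N

def diagCoeff (F : PowerSeries (Polynomial R)) : PowerSeries R :=
  mk fun N => (coeff N F).coeff N

lemma natDegreeCoeffLE_one : NatDegreeCoeffLE (1 : PowerSeries (Polynomial R)) := fun N => by
  rw [coeff_one]
  split_ifs <;> simp

lemma NatDegreeCoeffLE.mul {F G : PowerSeries (Polynomial R)} (hF : NatDegreeCoeffLE F)
    (hG : NatDegreeCoeffLE G) : NatDegreeCoeffLE (F * G) := fun N => by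
  rw [coeff_mul]
  refine Polynomial.natDegree_sum_le_of_forall_le _ _ fun p hp => ?_
  exact (Polynomial.natDegree_mul_le.trans (add_le_add (hF _) (hG _))).trans_eq
    (mem_antidiagonal.mp hp)

lemma natDegreeCoeffLE_prod {ι : Type*} (s : Finset ι) {F : ι → PowerSeries (Polynomial R)}
    (hF : ∀ i ∈ s, NatDegreeCoeffLE (F i)) : NatDegreeCoeffLE (∏ i ∈ s, F i) :=
  Finset.prod_induction _ _ (fun _ _ => NatDegreeCoeffLE.mul) natDegreeCoeffLE_one hF

lemma diagCoeff_one : diagCoeff (1 : PowerSeries (Polynomial R)) = 1 := by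
  ext N
  rw [diagCoeff, coeff_mk, coeff_one, coeff_one]
  split_ifs with h
  · rw [h, Polynomial.coeff_one_zero]
  · rw [Polynomial.coeff_zero]

lemma diagCoeff_mul {F G : PowerSeries (Polynomial R)} (hF : NatDegreeCoeffLE F)
    (hG : NatDegreeCoeffLE G) : diagCoeff (F * G) = diagCoeff F * diagCoeff G := by
  ext N
  simp only [diagCoeff, coeff_mk, coeff_mul, Polynomial.finsetSum_coeff]
  refine sum_congr rfl fun p hp => ?_
  rw [← mem_antidiagonal.mp hp, Polynomial.coeff_mul_add_eq_of_natDegree_le (hF _) (hG _)]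

lemma diagCoeff_prod {ι : Type*} (s : Finset ι) {F : ι → PowerSeries (Polynomial R)}
    (hF : ∀ i ∈ s, NatDegreeCoeffLE (F i)) :
    diagCoeff (∏ i ∈ s, F i) = ∏ i ∈ s, diagCoeff (F i) := by
  induction s using Finset.induction_on with
  | empty => simp [diagCoeff_one]
  | insert i s hi ih =>
    rw [forall_mem_insert] at hF
    rw [prod_insert hi, prod_insert hi, diagCoeff_mul hF.1 (natDegreeCoeffLE_prod s hF.2), ih hF.2]

lemma NatDegreeCoeffLE.natDegree_coeff_X_pow_mul_le {G : PowerSeries (Polynomial R)}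
    (hG : NatDegreeCoeffLE G) (s n : ℕ) : (coeff n (X ^ s * G)).natDegree ≤ n - s := by
  rw [coeff_X_pow_mul']
  split_ifs
  · exact hG _
  · simp

lemma NatDegreeCoeffLE.coeff_coeff_X_pow_mul_of_lt {G : PowerSeries (Polynomial R)}
    (hG : NatDegreeCoeffLE G) {s n m : ℕ} (h : n < s + m) :
    (coeff n (X ^ s * G)).coeff m = 0 := by
  rw [coeff_X_pow_mul']
  split_ifs
  · exact Polynomial.coeff_eq_zero_of_natDegree_lt ((hG _).trans_lt (by omega))
  · simp

lemma coeff_coeff_X_pow_mul_add (G : PowerSeries (Polynomial R)) (s m : ℕ) :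
    (coeff (s + m) (X ^ s * G)).coeff m = coeff m (diagCoeff G) := by
  rw [coeff_X_pow_mul', if_pos (by omega), Nat.add_sub_cancel_left, diagCoeff, coeff_mk]

end PowerSeries

def dFacPoly (m : ℕ) : PowerSeries (Polynomial ℚ) :=
  mk fun N => if m ∣ N then multichoosePoly (N / m) else 0

lemma map_eval_dFacPoly {m : ℕ} (hm : m ≠ 0) (k : ℤ) :
    map (Polynomial.evalRingHom (k : ℚ)) (dFacPoly m) = dFac m k := by
  ext N
  rw [dFac_eq_expand m hm, coeff_expand, coeff_map, dFacPoly, coeff_mk]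
  split_ifs <;> simp only [coeff_rescale_binomialSeries_neg, Polynomial.coe_evalRingHom,
    eval_multichoosePoly, Polynomial.eval_zero]

lemma natDegreeCoeffLE_dFacPoly (m : ℕ) : (dFacPoly m).NatDegreeCoeffLE := fun N => by
  rw [dFacPoly, coeff_mk]
  split_ifs
  · rw [natDegree_multichoosePoly]
    exact Nat.div_le_self N m
  · simp

lemma natDegreeCoeffLE_prod_dFacPoly {ι : Type*} (s : Finset ι) (f : ι → ℕ) :
    (∏ i ∈ s, dFacPoly (f i)).NatDegreeCoeffLE :=
  natDegreeCoeffLE_prod s fun i _ => natDegreeCoeffLE_dFacPoly (f i)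

lemma diagCoeff_dFacPoly_one : (dFacPoly 1).diagCoeff = exp ℚ := by
  ext N
  simp [diagCoeff, dFacPoly, coeff_multichoosePoly_self, coeff_exp]

lemma diagCoeff_dFacPoly_of_two_le {m : ℕ} (hm : 2 ≤ m) : (dFacPoly m).diagCoeff = 1 := by
  ext N
  rw [diagCoeff, coeff_mk, dFacPoly, coeff_mk, coeff_one]
  rcases N.eq_zero_or_pos with rfl | hN
  · simp [multichoosePoly]
  · rw [if_neg hN.ne']
    split_ifs
    · refine Polynomial.coeff_eq_zero_of_natDegree_lt ?_
      rw [natDegree_multichoosePoly]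
      exact Nat.div_lt_self hN (by omega)
    · rfl

def stair (a : ℕ) : Fin a → ℕ := fun j => j + 1

lemma sum_stair (a : ℕ) : ∑ j, stair a j = a * (a + 1) / 2 := by
  have h := sum_range_succ' (fun i => i) a
  rw [add_zero] at h
  rw [show ∑ j, stair a j = ∑ j : Fin a, ((j : ℕ) + 1) from rfl,
    Fin.sum_univ_eq_sum_range (· + 1), ← h, sum_range_id, Nat.add_sub_cancel, Nat.mul_comm]

lemma diagCoeff_prod_dFacPoly_stair {a : ℕ} (ha : a ≠ 0) :
    (∏ j, dFacPoly (stair a j)).diagCoeff = exp ℚ := by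
  obtain ⟨b, rfl⟩ := Nat.exists_eq_succ_of_ne_zero ha
  rw [diagCoeff_prod _ fun j _ => natDegreeCoeffLE_dFacPoly _, Fin.prod_univ_succ]
  simp [stair, diagCoeff_dFacPoly_one, diagCoeff_dFacPoly_of_two_le]

lemma stair_mem_strictTuples {a N : ℕ} (h : a ≤ N) : stair a ∈ strictTuples a N := by
  simp only [strictTuples, mem_filter, Fintype.mem_piFinset, mem_Icc]
  refine ⟨fun j => ⟨by simp [stair], by simp [stair]; omega⟩, fun i j hij => ?_⟩
  simpa [stair] using hij

lemma stair_le_of_mem_strictTuples {a N : ℕ} {f : Fin a → ℕ} (hf : f ∈ strictTuples a N) :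
    stair a ≤ f := by
  simp only [strictTuples, mem_filter, Fintype.mem_piFinset, mem_Icc] at hf
  rintro ⟨j, hj⟩
  induction j with
  | zero => exact (hf.1 _).1
  | succ j ih =>
    exact (ih (by omega)).trans_lt (hf.2 (show (⟨j, by omega⟩ : Fin a) < ⟨j + 1, hj⟩ from
      Nat.lt_succ_self j))

lemma sum_stair_lt_of_mem_strictTuples {a N : ℕ} {f : Fin a → ℕ} (hf : f ∈ strictTuples a N)
    (hne : f ≠ stair a) : ∑ j, stair a j < ∑ j, f j := by
  have hle := stair_le_of_mem_strictTuples hf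
  refine sum_lt_sum (fun j _ => hle j) ?_
  by_contra! h
  exact hne (funext fun j => le_antisymm (h j (mem_univ j)) (hle j))

def Apoly (a r n : ℕ) : Polynomial ℚ :=
  ∑ f ∈ strictTuples a n, coeff n (X ^ (r * ∑ j, f j) * ∏ j, dFacPoly (f j))

lemma Acoeff_eq_eval_Apoly (a : ℕ) (k : ℤ) (r n : ℕ) :
    Acoeff a k r n = (Apoly a r n).eval (k : ℚ) := by
  rw [Acoeff, Apoly, Polynomial.eval_finsetSum]
  refine sum_congr rfl fun f hf => ?_
  have hpos : ∀ j, f j ≠ 0 := fun j => by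
    have := stair_le_of_mem_strictTuples hf j
    simp only [stair] at this
    omega
  rw [← Polynomial.coe_evalRingHom, ← coeff_map]
  simp only [map_mul, map_pow, map_X, map_prod, map_eval_dFacPoly (hpos _)]

lemma natDegree_Apoly_le (a r n : ℕ) :
    (Apoly a r n).natDegree ≤ n - r * (a * (a + 1) / 2) := by
  refine Polynomial.natDegree_sum_le_of_forall_le _ _ fun f hf => ?_
  refine ((natDegreeCoeffLE_prod_dFacPoly _ f).natDegree_coeff_X_pow_mul_le _ _).trans ?_
  have := (sum_stair a).symm.trans_le (sum_le_sum fun j _ => stair_le_of_mem_strictTuples hf j)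
  have := Nat.mul_le_mul_left r this
  omega

lemma coeff_Apoly {a r n : ℕ} (ha : a ≠ 0) (hr : r ≠ 0) (hn : r * (a * (a + 1) / 2) ≤ n) :
    (Apoly a r n).coeff (n - r * (a * (a + 1) / 2)) =
      ((n - r * (a * (a + 1) / 2)).factorial : ℚ)⁻¹ := by
  set d := n - r * (a * (a + 1) / 2)
  have hstair : stair a ∈ strictTuples a n := by
    have : a ≤ a * (a + 1) / 2 :=
      (Nat.le_div_iff_mul_le two_pos).2 (Nat.mul_le_mul_left a (by omega))
    exact stair_mem_strictTuples (this.trans ((Nat.le_mul_of_pos_left _ (by omega)).trans hn))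
  rw [Apoly, Polynomial.finsetSum_coeff, sum_eq_single_of_mem _ hstair]
  · rw [sum_stair, show n = r * (a * (a + 1) / 2) + d by omega, coeff_coeff_X_pow_mul_add,
      diagCoeff_prod_dFacPoly_stair ha, coeff_exp]
    simp
  · intro f hf hne
    refine (natDegreeCoeffLE_prod_dFacPoly _ f).coeff_coeff_X_pow_mul_of_lt ?_
    have := sum_stair_lt_of_mem_strictTuples hf hne
    rw [sum_stair] at this
    have := Nat.mul_lt_mul_of_pos_left this (Nat.pos_of_ne_zero hr)
    omega

/-- Corollary 1.4, `𝒜`-part.  For `a, r ∈ ℕ` (positive) and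
`n ≥ ra(a+1)/2`, there is a polynomial `𝒫_{a,r,n}` of degree exactly `n - ra(a+1)/2`
with leading coefficient `1/(n - ra(a+1)/2)!` such that `c_{a,k,r}(n) = 𝒫_{a,r,n}(k)`
for every `k ∈ ℤ`. -/
theorem A_coeff_is_polynomial_in_k (a r : ℕ) (ha : 1 ≤ a) (hr : 1 ≤ r)
    (n : ℕ) (hn : r * (a * (a + 1) / 2) ≤ n) :
    ∃ P : Polynomial ℚ,
      P.degree = ((n - r * (a * (a + 1) / 2) : ℕ) : WithBot ℕ) ∧
      P.leadingCoeff = ((n - r * (a * (a + 1) / 2)).factorial : ℚ)⁻¹ ∧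
      ∀ k : ℤ, Acoeff a k r n = P.eval (k : ℚ) := by
  have hcoeff := coeff_Apoly (by omega) (by omega) hn
  have hne : (Apoly a r n).coeff (n - r * (a * (a + 1) / 2)) ≠ 0 := by
    rw [hcoeff]
    positivity
  refine ⟨Apoly a r n, ?_, ?_, fun k => Acoeff_eq_eval_Apoly a k r n⟩
  · exact Polynomial.degree_eq_of_le_of_coeff_ne_zero
      (Polynomial.degree_le_of_natDegree_le (natDegree_Apoly_le a r n)) hne
  · rw [Polynomial.leadingCoeff,
      Polynomial.natDegree_eq_of_le_of_coeff_ne_zero (natDegree_Apoly_le a r n) hne, hcoeff]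
end
end

section
/- Let k, r ∈ ℕ. In the ring ℚ⟦q⟧⟦X⟧ of formal power series, exp( Σ_{n≥1} ((−1)^{n+1}/n) · 𝒜_{1,nk,nr}(q) · X^n ) = Σ_{j≥0} 𝒜_{j,k,r}(q) · X^j, where 𝒜_{0,k,r}(q) := 1. In particular, for each a ∈ ℕ, 𝒜_{a,k,r} is a polynomial with rational coefficients in the series 𝒜_{1,nk,nr} for 1 ≤ n ≤ a. -/
open PowerSeries Finset
open scoped Classical

noncomputable section

/-- The exponential of a power series `f ∈ ℚ⟦q⟧⟦X⟧` with zero constant term (in `X`):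
`exp f = Σ_{m≥0} f^m / m!`.  Since `f` has no constant term, `f^m` has `X`-order at least
`m`, so the coefficient of `X^j` only involves `f^m` for `m ≤ j`. -/
def expX (f : PowerSeries (PowerSeries ℚ)) : PowerSeries (PowerSeries ℚ) :=
  PowerSeries.mk fun j => ∑ m ∈ Finset.range (j + 1),
    ((m.factorial : ℚ)⁻¹) • (PowerSeries.coeff j (f ^ m))

/-- The power series `𝒜_{a,k,r}(q) ∈ ℚ⟦q⟧`; note `𝒜_{0,k,r} = 1`. -/
def Aser (a : ℕ) (k : ℤ) (r : ℕ) : PowerSeries ℚ := PowerSeries.mk (Acoeff a k r)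

/-!
Write `tₙ = q^{rn} / (1 - q^n)^k`. Since `q^n ∣ tₙ`, modulo `q^{N+1}` the series `𝒜_{a,k,r}` is the
elementary symmetric polynomial `e_a(t₁, …, t_N)` and `𝒜_{1,nk,nr}` is the power sum
`p_n(t₁, …, t_N)`. In finitely many variables the identity is Newton's
`exp (∑ (-1)^{n+1} p_n Xⁿ / n) = ∏ (1 + tᵢ X)`: both sides solve `F' = (∑ᵢ tᵢ / (1 + tᵢ X)) F`
with `F(0) = 1`. The coefficient of `X^j` in `exp f` only depends on `f` modulo `q^{N+1}`, so the
identity holds modulo every `q^{N+1}`. The coefficient of `X^a` of `exp f` is a polynomial in the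
first `a` coefficients of `f`, which gives the second claim.
-/

namespace PowerSeries

variable {R : Type*}

section CommSemiring

variable [CommSemiring R]

theorem coeff_pow_eq_zero_of_lt {f : R⟦X⟧} (hf : constantCoeff f = 0) {j m : ℕ} (h : j < m) :
    coeff j (f ^ m) = 0 :=
  X_pow_dvd_iff.mp (pow_dvd_pow_of_dvd (X_dvd_iff.mpr hf) m) j h

theorem coeff_pow_mem (S : Subsemiring R) {f : R⟦X⟧} {j : ℕ} (hf : ∀ n ≤ j, coeff n f ∈ S)
    (m : ℕ) : coeff j (f ^ m) ∈ S := by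
  induction m generalizing j with
  | zero =>
    rw [pow_zero, coeff_one]
    split_ifs
    exacts [S.one_mem, S.zero_mem]
  | succ m ih =>
    rw [pow_succ', coeff_mul]
    refine S.sum_mem fun p hp => S.mul_mem (hf _ ?_) (ih fun n hn => hf n ?_)
    all_goals rw [HasAntidiagonal.mem_antidiagonal] at hp; omega

theorem coeff_prod_one_add_C_mul_X {ι : Type*} (s : Finset ι) (t : ι → R) (j : ℕ) :
    coeff j (∏ i ∈ s, (1 + C (t i) * X)) = ∑ T ∈ powersetCard j s, ∏ i ∈ T, t i := by
  classical
  simp_rw [add_comm (1 : R⟦X⟧), prod_add, prod_const_one, mul_one, prod_mul_distrib,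
    prod_const, ← map_prod, map_sum, coeff_C_mul_X_pow, powersetCard_eq_filter, sum_filter]
  exact sum_congr rfl fun T _ => by split_ifs <;> simp_all [eq_comm]

end CommSemiring

section CommRing

variable [CommRing R]

theorem one_add_C_mul_X_mul_mk_neg_pow (a : R) :
    (1 + C a * X) * mk (fun n => (-a) ^ n) = 1 := by
  ext (_ | n)
  · simp
  · rw [add_mul, one_mul, mul_assoc, map_add, coeff_C_mul, coeff_succ_X_mul, coeff_mk, coeff_mk,
      coeff_one, if_neg n.succ_ne_zero, pow_succ]
    ring

theorem derivative_prod_one_add_C_mul_X {ι : Type*} (s : Finset ι) (t : ι → R) :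
    d⁄dX R (∏ i ∈ s, (1 + C (t i) * X)) =
      (∑ i ∈ s, C (t i) * mk (fun n => (-t i) ^ n)) * ∏ i ∈ s, (1 + C (t i) * X) := by
  classical
  induction s using Finset.cons_induction with
  | empty => simp
  | cons i s his ih =>
    rw [prod_cons, Derivation.leibniz, ih, sum_cons, map_add, derivative_one, Derivation.leibniz,
      derivative_X, derivative_C]
    simp only [smul_eq_mul]
    linear_combination (-(C (t i) * ∏ j ∈ s, (1 + C (t j) * X))) *
      one_add_C_mul_X_mul_mk_neg_pow (t i)

theorem eq_of_derivative_eq_mul [IsAddTorsionFree R] {g F G : R⟦X⟧}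
    (hF : d⁄dX R F = g * F) (hG : d⁄dX R G = g * G) (h0 : constantCoeff F = constantCoeff G) :
    F = G := by
  ext n
  induction n using Nat.strong_induction_on with
  | _ n ih =>
    rcases n with _ | n
    · simpa using h0
    · have h : coeff n (d⁄dX R F) = coeff n (d⁄dX R G) := by
        rw [hF, hG, coeff_mul, coeff_mul]
        refine sum_congr rfl fun p hp => ?_
        rw [ih p.2 (by rw [HasAntidiagonal.mem_antidiagonal] at hp; omega)]
      rw [coeff_derivative, coeff_derivative, ← Nat.cast_succ, mul_comm, ← nsmul_eq_mul,
        mul_comm, ← nsmul_eq_mul] at h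
      exact nsmul_right_injective n.succ_ne_zero h

end CommRing

end PowerSeries

theorem Finset.sum_filter_strictMono_piFinset {α M : Type*} [LinearOrder α] [AddCommMonoid M]
    (s : Finset α) (a : ℕ) (g : Finset α → M) :
    ∑ f ∈ (Fintype.piFinset fun _ : Fin a => s).filter StrictMono, g (univ.image f) =
      ∑ T ∈ powersetCard a s, g T := by
  refine sum_bij (fun f _ => univ.image f) (fun f hf => ?_) (fun f hf f' hf' h => ?_)
    (fun T hT => ?_) (fun _ _ => rfl)
  · simp only [mem_filter, Fintype.mem_piFinset] at hf
    rw [mem_powersetCard, card_image_of_injective _ hf.2.injective, card_univ, Fintype.card_fin]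
    exact ⟨image_subset_iff.mpr fun i _ => hf.1 i, rfl⟩
  · simp only [mem_filter] at hf hf'
    have hcard : (univ.image f).card = a := by
      rw [card_image_of_injective _ hf.2.injective, card_univ, Fintype.card_fin]
    exact (orderEmbOfFin_unique hcard (fun i => mem_image_of_mem f (mem_univ i)) hf.2).trans
      (orderEmbOfFin_unique hcard (fun i => h ▸ mem_image_of_mem f' (mem_univ i)) hf'.2).symm
  · rw [mem_powersetCard] at hT
    refine ⟨T.orderEmbOfFin hT.2, ?_, ?_⟩
    · simp only [mem_filter, Fintype.mem_piFinset]
      exact ⟨fun i => hT.1 (T.orderEmbOfFin_mem hT.2 i), (T.orderEmbOfFin hT.2).strictMono⟩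
    · apply coe_injective
      rw [coe_image, coe_univ, Set.image_univ, range_orderEmbOfFin]

local notation "ℚ⟦q⟧" => PowerSeries ℚ

instance : IsAddTorsionFree ℚ⟦q⟧ := .of_module_nnrat _

def expPartialSum (f : ℚ⟦q⟧⟦X⟧) (n : ℕ) : ℚ⟦q⟧⟦X⟧ :=
  ∑ m ∈ range (n + 1), (m.factorial : ℚ)⁻¹ • f ^ m

theorem coeff_expX (f : ℚ⟦q⟧⟦X⟧) (j : ℕ) : coeff j (expX f) = coeff j (expPartialSum f j) := by
  rw [expX, coeff_mk, expPartialSum, map_sum]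
  simp only [map_rat_smul]

theorem coeff_expPartialSum_of_le {f : ℚ⟦q⟧⟦X⟧} (hf : constantCoeff f = 0) {j n : ℕ} (h : j ≤ n) :
    coeff j (expPartialSum f n) = coeff j (expX f) := by
  rw [coeff_expX, expPartialSum, expPartialSum, map_sum, map_sum,
    ← sum_range_add_sum_Ico _ (Nat.succ_le_succ h)]
  refine add_eq_left.mpr (sum_eq_zero fun m hm => ?_)
  rw [mem_Ico] at hm
  rw [map_rat_smul, coeff_pow_eq_zero_of_lt hf (by omega), smul_zero]

theorem derivative_expPartialSum_succ (f : ℚ⟦q⟧⟦X⟧) (n : ℕ) :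
    d⁄dX ℚ⟦q⟧ (expPartialSum f (n + 1)) = d⁄dX ℚ⟦q⟧ f * expPartialSum f n := by
  rw [expPartialSum, sum_range_succ', map_add, map_sum, expPartialSum, mul_sum]
  simp only [pow_zero, map_rat_smul, Derivation.leibniz_pow, add_tsub_cancel_right]
  rw [derivative_one, smul_zero, add_zero]
  refine sum_congr rfl fun m _ => ?_
  have hfac : ((m + 1).factorial : ℚ)⁻¹ * (m + 1 : ℕ) = (m.factorial : ℚ)⁻¹ := by
    rw [Nat.factorial_succ]
    push_cast
    field_simp
  rw [← Nat.cast_smul_eq_nsmul ℚ, smul_smul, hfac, smul_eq_mul, mul_smul_comm, mul_comm]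

theorem derivative_expX {f : ℚ⟦q⟧⟦X⟧} (hf : constantCoeff f = 0) :
    d⁄dX ℚ⟦q⟧ (expX f) = d⁄dX ℚ⟦q⟧ f * expX f := by
  ext n : 1
  calc coeff n (d⁄dX ℚ⟦q⟧ (expX f))
      = coeff n (d⁄dX ℚ⟦q⟧ (expPartialSum f (n + 1))) := by
        rw [coeff_derivative, coeff_derivative, coeff_expPartialSum_of_le hf le_rfl]
    _ = coeff n (d⁄dX ℚ⟦q⟧ f * expPartialSum f n) := by rw [derivative_expPartialSum_succ]
    _ = coeff n (d⁄dX ℚ⟦q⟧ f * expX f) := by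
        rw [coeff_mul, coeff_mul]
        refine sum_congr rfl fun p hp => ?_
        rw [coeff_expPartialSum_of_le hf (by rw [HasAntidiagonal.mem_antidiagonal] at hp; omega)]

theorem dvd_coeff_expX_sub {f g : ℚ⟦q⟧⟦X⟧} {d : ℚ⟦q⟧} (h : ∀ n, d ∣ coeff n f - coeff n g)
    (j : ℕ) : d ∣ coeff j (expX f) - coeff j (expX g) := by
  have hfg : map (Ideal.Quotient.mk (Ideal.span {d})) f =
      map (Ideal.Quotient.mk (Ideal.span {d})) g := by
    ext n
    rw [coeff_map, coeff_map, Ideal.Quotient.eq, Ideal.mem_span_singleton]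
    exact h n
  rw [← Ideal.mem_span_singleton, ← Ideal.Quotient.eq, coeff_expX, coeff_expX, expPartialSum,
    expPartialSum, map_sum, map_sum, map_sum, map_sum]
  simp only [map_rat_smul, ← coeff_map, map_pow, hfg]

theorem coeff_expX_mem (S : Subalgebra ℚ ℚ⟦q⟧) {f : ℚ⟦q⟧⟦X⟧} {j : ℕ}
    (hf : ∀ n ≤ j, coeff n f ∈ S) : coeff j (expX f) ∈ S := by
  rw [coeff_expX, expPartialSum, map_sum]
  exact S.sum_mem fun m _ => by
    rw [map_rat_smul]
    exact S.smul_mem (coeff_pow_mem S.toSubsemiring hf m) _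

/-- When `g n = ∑ i ∈ s, t i ^ n` are power sums, `logSeries g = log ∏ i ∈ s, (1 + t i X)`. -/
def logSeries (g : ℕ → ℚ⟦q⟧) : ℚ⟦q⟧⟦X⟧ :=
  mk fun n => if n = 0 then 0 else ((-1 : ℚ) ^ (n + 1) / n) • g n

theorem constantCoeff_logSeries (g : ℕ → ℚ⟦q⟧) : constantCoeff (logSeries g) = 0 := by
  rw [← coeff_zero_eq_constantCoeff_apply, logSeries, coeff_mk, if_pos rfl]

theorem derivative_logSeries_powerSum {ι : Type*} (s : Finset ι) (t : ι → ℚ⟦q⟧) :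
    d⁄dX ℚ⟦q⟧ (logSeries fun n => ∑ i ∈ s, t i ^ n) =
      ∑ i ∈ s, C (t i) * mk (fun n => (-t i) ^ n) := by
  ext n : 1
  rw [coeff_derivative, logSeries, coeff_mk, if_neg n.succ_ne_zero, map_sum, smul_sum, sum_mul]
  refine sum_congr rfl fun i _ => ?_
  have hc : C ((-1 : ℚ) ^ (n + 1 + 1) / ((n + 1 : ℕ) : ℚ)) * ((n : ℚ⟦q⟧) + 1) = (-1) ^ n := by
    rw [← map_natCast C, ← map_one C, ← map_add, ← map_mul, ← map_neg, ← map_pow]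
    congr 1
    push_cast
    field_simp
    ring
  rw [coeff_C_mul, coeff_mk, smul_eq_C_mul, neg_pow (t i), ← hc]
  ring

theorem expX_logSeries_powerSum {ι : Type*} (s : Finset ι) (t : ι → ℚ⟦q⟧) :
    expX (logSeries fun n => ∑ i ∈ s, t i ^ n) = ∏ i ∈ s, (1 + C (t i) * X) := by
  refine eq_of_derivative_eq_mul ?_ (derivative_prod_one_add_C_mul_X s t) ?_
  · rw [derivative_expX (constantCoeff_logSeries _), derivative_logSeries_powerSum]
  rw [← coeff_zero_eq_constantCoeff_apply (expX _), coeff_expX, map_prod]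
  simp [expPartialSum]

theorem dvd_coeff_expX_logSeries_sub {g g' : ℕ → ℚ⟦q⟧} {d : ℚ⟦q⟧}
    (h : ∀ n, n ≠ 0 → d ∣ g n - g' n) (j : ℕ) :
    d ∣ coeff j (expX (logSeries g)) - coeff j (expX (logSeries g')) := by
  refine dvd_coeff_expX_sub (fun n => ?_) j
  rw [logSeries, logSeries, coeff_mk, coeff_mk]
  split_ifs with hn
  · simp
  · rw [← smul_sub, smul_eq_C_mul]
    exact (h n hn).mul_left _

def Aterm (k r n : ℕ) : ℚ⟦q⟧ := X ^ (r * n) * dFac n k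

theorem Aterm_mul_mul (k r n m : ℕ) : Aterm (m * k) (m * r) n = Aterm k r n ^ m := by
  simp only [Aterm, dFac, Nat.cast_nonneg, if_true, Int.toNat_natCast, mul_pow, ← pow_mul]
  ring_nf

theorem X_pow_dvd_Aterm (k : ℕ) {r : ℕ} (hr : 1 ≤ r) (n : ℕ) : (X : ℚ⟦q⟧) ^ n ∣ Aterm k r n :=
  (pow_dvd_pow X (Nat.le_mul_of_pos_left n hr)).mul_right _

theorem Acoeff_eq_sum_powersetCard (a k r M : ℕ) :
    Acoeff a k r M = ∑ T ∈ powersetCard a (Icc 1 M), coeff M (∏ n ∈ T, Aterm k r n) := by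
  rw [Acoeff, strictTuples, ← sum_filter_strictMono_piFinset]
  refine sum_congr rfl fun f hf => ?_
  rw [prod_image fun i _ j _ h => (mem_filter.mp hf).2.injective h]
  simp only [Aterm, prod_mul_distrib, prod_pow_eq_pow_sum, mul_sum]

theorem X_pow_succ_dvd_Aser_sub (a k r N : ℕ) (hr : 1 ≤ r) :
    (X : ℚ⟦q⟧) ^ (N + 1) ∣ Aser a k r - ∑ T ∈ powersetCard a (Icc 1 N), ∏ n ∈ T, Aterm k r n := by
  refine X_pow_dvd_iff.mpr fun M hM => ?_
  rw [map_sub, sub_eq_zero, Aser, coeff_mk, Acoeff_eq_sum_powersetCard, map_sum]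
  refine sum_subset (powersetCard_mono (Icc_subset_Icc_right (by omega))) fun T hT hT' => ?_
  obtain ⟨n, hnT, hMn⟩ : ∃ n ∈ T, M < n := by
    by_contra! hle
    rw [mem_powersetCard] at hT hT'
    exact hT' ⟨fun n hn => mem_Icc.mpr ⟨(mem_Icc.mp (hT.1 hn)).1, hle n hn⟩, hT.2⟩
  exact X_pow_dvd_iff.mp ((X_pow_dvd_Aterm k hr n).trans (dvd_prod_of_mem _ hnT)) M hMn

theorem X_pow_succ_dvd_Aser_one_sub (k r N : ℕ) (hr : 1 ≤ r) {n : ℕ} (hn : n ≠ 0) :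
    (X : ℚ⟦q⟧) ^ (N + 1) ∣ Aser 1 (n * k : ℕ) (n * r) - ∑ m ∈ Icc 1 N, Aterm k r m ^ n := by
  have h := X_pow_succ_dvd_Aser_sub 1 (n * k) (n * r) N (Nat.mul_pos (Nat.pos_of_ne_zero hn) hr)
  simpa only [powersetCard_one, sum_map, Function.Embedding.coeFn_mk, prod_singleton,
    Aterm_mul_mul] using h

theorem expX_logSeries_Aser_one (k r : ℕ) (hr : 1 ≤ r) :
    expX (logSeries fun n => Aser 1 (n * k : ℕ) (n * r)) = mk fun j => Aser j k r := by
  ext j N : 2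
  have hexp := dvd_coeff_expX_logSeries_sub (fun n hn => X_pow_succ_dvd_Aser_one_sub k r N hr hn) j
  rw [expX_logSeries_powerSum, coeff_prod_one_add_C_mul_X] at hexp
  have hexp_N := X_pow_dvd_iff.mp hexp N N.lt_succ_self
  have hA_N := X_pow_dvd_iff.mp (X_pow_succ_dvd_Aser_sub j k r N hr) N N.lt_succ_self
  rw [map_sub, sub_eq_zero] at hexp_N hA_N
  rw [hexp_N, coeff_mk, hA_N]

theorem Aser_mem_adjoin_Aser_one (a k r : ℕ) (hr : 1 ≤ r) :
    Aser a k r ∈ Algebra.adjoin ℚ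
      (Set.range fun i : Fin a => Aser 1 (((i : ℕ) + 1) * k : ℕ) (((i : ℕ) + 1) * r)) := by
  have h := congrArg (coeff a) (expX_logSeries_Aser_one k r hr)
  rw [coeff_mk] at h
  rw [← h]
  refine coeff_expX_mem _ fun n hn => ?_
  rw [logSeries, coeff_mk]
  split_ifs with h0
  · exact Subalgebra.zero_mem _
  · refine Subalgebra.smul_mem _
      (Algebra.subset_adjoin (Set.mem_range.mpr ⟨⟨n - 1, by omega⟩, ?_⟩)) _
    simp only [Nat.sub_add_cancel (Nat.pos_of_ne_zero h0)]

theorem A_exp_identity_general (k r : ℕ) (hr : 1 ≤ r) :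
    expX (PowerSeries.mk fun n =>
        if n = 0 then 0 else ((-1 : ℚ) ^ (n + 1) / n) • Aser 1 ((n * k : ℕ) : ℤ) (n * r)) =
      PowerSeries.mk (fun j => Aser j (k : ℤ) r) ∧
    ∀ a : ℕ, 1 ≤ a → ∃ Q : MvPolynomial (Fin a) ℚ,
      Aser a (k : ℤ) r =
        MvPolynomial.aeval
          (fun i : Fin a => Aser 1 ((((i : ℕ) + 1) * k : ℕ) : ℤ) (((i : ℕ) + 1) * r)) Q := by
  refine ⟨expX_logSeries_Aser_one k r hr, fun a _ => ?_⟩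
  have h := Aser_mem_adjoin_Aser_one a k r hr
  rw [Algebra.adjoin_range_eq_range_aeval] at h
  obtain ⟨Q, hQ⟩ := h
  exact ⟨Q, hQ.symm⟩

/-- the quasi-shuffle exponential identity for `𝒜`, from the proof of
Proposition 3.1.  For `k, r ∈ ℕ` (positive), in `ℚ⟦q⟧⟦X⟧`:
`exp(Σ_{n≥1} ((-1)^{n+1}/n) 𝒜_{1,nk,nr}(q) Xⁿ) = Σ_{j≥0} 𝒜_{j,k,r}(q) X^j`
(with `𝒜_{0,k,r} = 1`).  In particular each `𝒜_{a,k,r}` is a polynomial with rational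
coefficients in the series `𝒜_{1,nk,nr}`, `1 ≤ n ≤ a`. -/
theorem A_exp_identity (k r : ℕ) (hk : 1 ≤ k) (hr : 1 ≤ r) :
    expX (PowerSeries.mk fun n =>
        if n = 0 then 0 else ((-1 : ℚ) ^ (n + 1) / n) • Aser 1 ((n * k : ℕ) : ℤ) (n * r)) =
      PowerSeries.mk (fun j => Aser j (k : ℤ) r) ∧
    ∀ a : ℕ, 1 ≤ a → ∃ Q : MvPolynomial (Fin a) ℚ,
      Aser a (k : ℤ) r =
        MvPolynomial.aeval
          (fun i : Fin a => Aser 1 ((((i : ℕ) + 1) * k : ℕ) : ℤ) (((i : ℕ) + 1) * r)) Q :=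
  A_exp_identity_general k r hr
end
end

section
/- Let a, k, r ∈ ℕ with 1 ≤ r ≤ k. Then the power series 𝒜_{a,k,r}(q) belongs to the ℚ-subalgebra of ℚ⟦q⟧ generated by the Eisenstein q-series 𝒢_j(q) := Σ_{n≥1} σ_{j−1}(n) q^n for 1 ≤ j ≤ ak, where σ_m(n) := Σ_{d∣n} d^m. Moreover it can be written as a ℚ-linear combination of monomials 𝒢_{j₁}⋯𝒢_{j_t} (including the empty monomial 1) with j₁ + ⋯ + j_t ≤ ak. -/
open PowerSeries Finset
open scoped Classical

noncomputable section

/-- The Eisenstein `q`-series `𝒢_j(q) = Σ_{n≥1} σ_{j-1}(n) qⁿ ∈ ℚ⟦q⟧`, where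
`σ_m(n) = Σ_{d ∣ n} d^m` (the coefficient at `n = 0` is `0` since `Nat.divisors 0 = ∅`). -/
def Gq (j : ℕ) : PowerSeries ℚ :=
  PowerSeries.mk fun n => ∑ d ∈ n.divisors, (d : ℚ) ^ (j - 1)

/-!
Write `u_n = q^{rn}/(1-q^n)^k`. Then `𝒜_{a,k,r}` is the elementary symmetric function `e_a` of
the `u_n`, and the power sums `p_i = Σ u_n^i` are the series `𝒜_{1,ki,ri}`, so Newton's identity
`a e_a = ± Σ_{i ≥ 1} ± e_{a-i} p_i` reduces everything, by induction on `a`, to the case `a = 1`.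
There `u_n` is `x^r/(1-x)^k` evaluated at `x = q^n`, so the coefficient of `q^N` in `𝒜_{1,k,r}` is
`Σ_{d ∣ N} binom(d+k-1-r, k-1)`; for `1 ≤ r ≤ k` and `d ≥ 1` the summand is a polynomial of degree
`k-1` in `d`, which makes `𝒜_{1,k,r}` a linear combination of `𝒢_1, …, 𝒢_k`. Weights add under
products, which gives the bound `ak`. The infinite symmetric functions are handled through their
truncations to `n ≤ M`, which agree with the series modulo `q^{M+1}` because `r ≥ 1`.
-/

namespace Finset

theorem sum_strictMono_prod_eq_sum_powersetCard {α β : Type*} [LinearOrder α] [CommSemiring β]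
    (s : Finset α) (a : ℕ) (g : α → β) :
    ∑ f ∈ (Fintype.piFinset fun _ : Fin a => s).filter (fun f => StrictMono f), ∏ j, g (f j) =
      ∑ t ∈ s.powersetCard a, ∏ x ∈ t, g x := by
  refine sum_bij (fun f _ => univ.image f) ?_ ?_ ?_ ?_
  · intro f hf
    simp only [mem_filter, Fintype.mem_piFinset] at hf
    rw [mem_powersetCard, card_image_of_injective _ hf.2.injective, card_univ, Fintype.card_fin]
    exact ⟨fun x hx => by obtain ⟨j, -, rfl⟩ := mem_image.mp hx; exact hf.1 j, rfl⟩
  · intro f₁ hf₁ f₂ hf₂ h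
    simp only [mem_filter] at hf₁ hf₂
    have hcard : (univ.image f₁).card = a := by
      rw [card_image_of_injective _ hf₁.2.injective, card_univ, Fintype.card_fin]
    exact (orderEmbOfFin_unique hcard (fun j => mem_image_of_mem f₁ (mem_univ j)) hf₁.2).trans
      (orderEmbOfFin_unique hcard (fun j => h ▸ mem_image_of_mem f₂ (mem_univ j)) hf₂.2).symm
  · intro t ht
    obtain ⟨hts, hcard⟩ := mem_powersetCard.mp ht
    refine ⟨t.orderEmbOfFin hcard, ?_, image_orderEmbOfFin_univ t hcard⟩
    simp only [mem_filter, Fintype.mem_piFinset]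
    exact ⟨fun j => hts (orderEmbOfFin_mem t hcard j), (t.orderEmbOfFin hcard).strictMono⟩
  · intro f hf
    simp only [mem_filter] at hf
    rw [prod_image fun x _ y _ h => hf.2.injective h]

/-- Newton's identities, evaluated at a finite family. -/
theorem mul_sum_powersetCard_prod_eq {ι S : Type*} [CommRing S] (s : Finset ι) (u : ι → S)
    (a : ℕ) :
    a * ∑ t ∈ s.powersetCard a, ∏ i ∈ t, u i = (-1) ^ (a + 1) *
      ∑ x ∈ antidiagonal a with x.1 < a,
        (-1) ^ x.1 * (∑ t ∈ s.powersetCard x.1, ∏ i ∈ t, u i) * ∑ i ∈ s, u i ^ x.2 := by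
  have h := congrArg (MvPolynomial.aeval fun i : s => u i)
    (MvPolynomial.mul_esymm_eq_sum s ℤ a)
  have hval : ((univ : Finset s).val.map fun i : s => u i) = s.val.map u :=
    Multiset.attach_map_val' s.val u
  have hpsum (m : ℕ) : ∑ i : s, u i ^ m = ∑ i ∈ s, u i ^ m := sum_coe_sort s (u · ^ m)
  simp only [map_mul, map_natCast, map_pow, map_neg, map_one, map_sum,
    MvPolynomial.aeval_esymm_eq_multiset_esymm, MvPolynomial.psum, MvPolynomial.aeval_X, hval,
    hpsum] at h
  simpa only [esymm_map_val] using h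

end Finset

namespace PowerSeries

theorem mk_span_X_pow_eq_iff {R : Type*} [CommRing R] {n : ℕ} {f g : R⟦X⟧} :
    Ideal.Quotient.mk (Ideal.span {X ^ n}) f = Ideal.Quotient.mk (Ideal.span {X ^ n}) g ↔
      ∀ p < n, coeff p f = coeff p g := by
  simp only [Ideal.Quotient.eq, Ideal.mem_span_singleton, X_pow_dvd_iff, map_sub, sub_eq_zero]

end PowerSeries

open MvPolynomial in
def eisensteinSpan (n W : ℕ) : Submodule ℚ ℚ⟦X⟧ :=
  (restrictSupport ℚ {d : Fin n →₀ ℕ | Finsupp.weight (fun i : Fin n => (i : ℕ) + 1) d ≤ W}).map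
    (aeval fun i : Fin n => Gq ((i : ℕ) + 1)).toLinearMap

namespace eisensteinSpan

open MvPolynomial

theorem mem_iff {n W : ℕ} {f : ℚ⟦X⟧} :
    f ∈ eisensteinSpan n W ↔ ∃ Q : MvPolynomial (Fin n) ℚ,
      Q.weightedTotalDegree (fun i : Fin n => (i : ℕ) + 1) ≤ W ∧
        f = aeval (fun i : Fin n => Gq ((i : ℕ) + 1)) Q := by
  simp only [eisensteinSpan, Submodule.mem_map, mem_restrictSupport_iff, weightedTotalDegree,
    Finset.sup_le_iff, AlgHom.toLinearMap_apply, eq_comm (a := f), Set.subset_def,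
    Finset.mem_coe, Set.mem_ofPred_eq]

theorem mul_le (n W₁ W₂ : ℕ) :
    eisensteinSpan n W₁ * eisensteinSpan n W₂ ≤ eisensteinSpan n (W₁ + W₂) := by
  rw [eisensteinSpan, eisensteinSpan, ← Submodule.map_mul, ← restrictSupport_add]
  refine Submodule.map_mono (restrictSupport_mono _ ?_)
  rintro _ ⟨d₁, hd₁, d₂, hd₂, rfl⟩
  simp only [Set.mem_ofPred_eq, map_add] at hd₁ hd₂ ⊢
  omega

theorem mul_mem {n W₁ W₂ : ℕ} {f g : ℚ⟦X⟧} (hf : f ∈ eisensteinSpan n W₁)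
    (hg : g ∈ eisensteinSpan n W₂) : f * g ∈ eisensteinSpan n (W₁ + W₂) :=
  mul_le n W₁ W₂ (Submodule.mul_mem_mul hf hg)

theorem one_mem (n W : ℕ) : (1 : ℚ⟦X⟧) ∈ eisensteinSpan n W :=
  Submodule.mem_map.mpr
    ⟨1, by simp [mem_restrictSupport_iff, support_one], map_one (MvPolynomial.aeval _)⟩

theorem Gq_mem {n W : ℕ} (i : Fin n) (hi : (i : ℕ) + 1 ≤ W) :
    Gq ((i : ℕ) + 1) ∈ eisensteinSpan n W :=
  Submodule.mem_map.mpr ⟨X i,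
    by simpa [mem_restrictSupport_iff, support_X, Finsupp.weight_single] using hi, aeval_X _ _⟩

end eisensteinSpan

def lambertTerm (k r n : ℕ) : ℚ⟦X⟧ := X ^ (r * n) * ((1 - X ^ n)⁻¹) ^ k

/-- The part of the series `𝒜_{a,k,r}` with `n_a ≤ M`. -/
def partialAser (a k r M : ℕ) : ℚ⟦X⟧ :=
  ∑ t ∈ (Icc 1 M).powersetCard a, ∏ n ∈ t, lambertTerm k r n

theorem lambertTerm_pow (k r n i : ℕ) : lambertTerm k r n ^ i = lambertTerm (k * i) (r * i) n := by
  simp only [lambertTerm, mul_pow, ← pow_mul]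
  ring_nf

theorem partialAser_zero (k r M : ℕ) : partialAser 0 k r M = 1 := by
  simp [partialAser]

theorem partialAser_one (k r M : ℕ) :
    partialAser 1 k r M = ∑ n ∈ Icc 1 M, lambertTerm k r n := by
  simp [partialAser, powersetCard_one]

theorem Acoeff_eq_coeff_partialAser (a k r N : ℕ) :
    Acoeff a k r N = coeff N (partialAser a k r N) := by
  rw [Acoeff, partialAser, strictTuples, ← sum_strictMono_prod_eq_sum_powersetCard, map_sum]
  refine sum_congr rfl fun f _ => ?_
  simp [lambertTerm, dFac, prod_mul_distrib, prod_pow_eq_pow_sum, mul_sum]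

/-- Since `r ≥ 1`, a tuple with an entry `n > N` contributes a multiple of `q^{rn}`. -/
theorem coeff_partialAser_of_le {a k r N M : ℕ} (hr : 1 ≤ r) (h : N ≤ M) :
    coeff N (partialAser a k r M) = coeff N (partialAser a k r N) := by
  rw [partialAser, partialAser, map_sum, map_sum]
  refine (sum_subset (powersetCard_mono (Icc_subset_Icc_right h)) fun t htM htN => ?_).symm
  obtain ⟨htM, hcard⟩ := mem_powersetCard.mp htM
  obtain ⟨n, hnt, hNn⟩ : ∃ n ∈ t, N < n := by
    by_contra! hle
    exact htN (mem_powersetCard.mpr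
      ⟨fun n hn => mem_Icc.mpr ⟨(mem_Icc.mp (htM hn)).1, hle n hn⟩, hcard⟩)
  have hdvd : X ^ (r * n) ∣ ∏ m ∈ t, lambertTerm k r m :=
    (dvd_mul_right _ _).trans (dvd_prod_of_mem _ hnt)
  exact X_pow_dvd_iff.mp hdvd N (by nlinarith)

theorem mk_Aser_eq_mk_partialAser {a k r n M : ℕ} (hr : 1 ≤ r) (h : n ≤ M + 1) :
    Ideal.Quotient.mk (Ideal.span {X ^ n}) (Aser a k r) =
      Ideal.Quotient.mk (Ideal.span {X ^ n}) (partialAser a k r M) :=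
  mk_span_X_pow_eq_iff.mpr fun p hp => by
    rw [Aser, coeff_mk, Acoeff_eq_coeff_partialAser]
    exact (coeff_partialAser_of_le hr (by omega)).symm

theorem Aser_zero (k r : ℕ) : Aser 0 k r = 1 := by
  ext N
  rw [Aser, coeff_mk, Acoeff_eq_coeff_partialAser, partialAser_zero]

theorem Aser_newton {r : ℕ} (hr : 1 ≤ r) (a k : ℕ) :
    (a : ℚ⟦X⟧) * Aser a k r = (-1) ^ (a + 1) *
      ∑ x ∈ antidiagonal a with x.1 < a,
        (-1) ^ x.1 * Aser x.1 k r * Aser 1 (k * x.2 : ℕ) (r * x.2) := by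
  ext N
  set π := Ideal.Quotient.mk (Ideal.span {(X : ℚ⟦X⟧) ^ (N + 1)})
  refine mk_span_X_pow_eq_iff.mp ?_ N (by omega : N < N + 1)
  have hpow : ∀ x ∈ {x ∈ antidiagonal a | x.1 < a},
      π (Aser 1 (k * x.2 : ℕ) (r * x.2)) = π (∑ n ∈ Icc 1 N, lambertTerm k r n ^ x.2) := by
    intro x hx
    have : 1 ≤ x.2 := by simp at hx; omega
    simp only [lambertTerm_pow, ← partialAser_one]
    exact mk_Aser_eq_mk_partialAser (by nlinarith) le_rfl
  calc π (a * Aser a k r) = π (a * partialAser a k r N) := by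
        rw [map_mul, map_mul, mk_Aser_eq_mk_partialAser hr le_rfl]
    _ = π ((-1) ^ (a + 1) * ∑ x ∈ antidiagonal a with x.1 < a, (-1) ^ x.1 *
          partialAser x.1 k r N * ∑ n ∈ Icc 1 N, lambertTerm k r n ^ x.2) := by
        rw [partialAser, mul_sum_powersetCard_prod_eq]
        rfl
    _ = _ := by
        rw [map_mul, map_mul, map_sum, map_sum]
        refine congrArg _ (sum_congr rfl fun x hx => ?_)
        rw [map_mul, map_mul, map_mul, map_mul, hpow x hx, mk_Aser_eq_mk_partialAser hr le_rfl]

theorem inv_one_sub_X_pow_succ (k : ℕ) :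
    ((1 - X : ℚ⟦X⟧)⁻¹) ^ (k + 1) = mk fun m => ((k + m).choose k : ℚ) := by
  rw [← (eq_inv_iff_mul_eq_one (by simp)).mpr (mk_one_mul_one_sub_eq_one ℚ),
    mk_one_pow_eq_mk_choose_add]

theorem coeff_X_pow_mul_inv_one_sub_X_pow_succ {k r d : ℕ} (hd : 1 ≤ d) (hr : r ≤ k + 1) :
    coeff d (X ^ r * ((1 - X : ℚ⟦X⟧)⁻¹) ^ (k + 1)) = ((d + k - r).choose k : ℚ) := by
  rw [inv_one_sub_X_pow_succ, coeff_X_pow_mul', coeff_mk]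
  split_ifs with h
  · congr 3
    omega
  · rw [Nat.choose_eq_zero_of_lt (by omega), Nat.cast_zero]

theorem expand_inv_one_sub_X {n : ℕ} (hn : n ≠ 0) :
    expand n hn ((1 - X : ℚ⟦X⟧)⁻¹) = (1 - X ^ n)⁻¹ := by
  have h : expand n hn (1 - X : ℚ⟦X⟧) = 1 - X ^ n := by simp
  rw [eq_inv_iff_mul_eq_one (by simp [hn]), ← h, ← map_mul,
    PowerSeries.inv_mul_cancel _ (by simp), map_one]

theorem lambertTerm_eq_expand (k r : ℕ) {n : ℕ} (hn : n ≠ 0) :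
    lambertTerm k r n = expand n hn (X ^ r * ((1 - X : ℚ⟦X⟧)⁻¹) ^ k) := by
  rw [map_mul, map_pow, map_pow, expand_X, expand_inv_one_sub_X, lambertTerm, mul_comm r n,
    pow_mul]

theorem coeff_lambertTerm (k r : ℕ) {n : ℕ} (hn : n ≠ 0) (N : ℕ) :
    coeff N (lambertTerm k r n) =
      if n ∣ N then coeff (N / n) (X ^ r * ((1 - X : ℚ⟦X⟧)⁻¹) ^ k) else 0 := by
  rw [lambertTerm_eq_expand k r hn, coeff_expand]

theorem coeff_Aser_one (k r N : ℕ) :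
    coeff N (Aser 1 k r) = ∑ d ∈ N.divisors, coeff d (X ^ r * ((1 - X : ℚ⟦X⟧)⁻¹) ^ k) := by
  rw [Aser, coeff_mk, Acoeff_eq_coeff_partialAser, partialAser_one, map_sum]
  calc ∑ n ∈ Icc 1 N, coeff N (lambertTerm k r n)
      = ∑ n ∈ N.divisors, coeff N (lambertTerm k r n) := by
        refine (sum_subset (fun n hn => ?_) fun n hn hnN => ?_).symm
        · exact mem_Icc.mpr ⟨Nat.pos_of_mem_divisors hn, Nat.divisor_le hn⟩
        · obtain ⟨hn1, hnN'⟩ := mem_Icc.mp hn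
          rw [coeff_lambertTerm k r (by omega),
            if_neg fun hdvd => hnN (Nat.mem_divisors.mpr ⟨hdvd, by omega⟩)]
    _ = ∑ n ∈ N.divisors, coeff (N / n) (X ^ r * ((1 - X : ℚ⟦X⟧)⁻¹) ^ k) :=
        sum_congr rfl fun n hn => by
          rw [coeff_lambertTerm k r (Nat.pos_of_mem_divisors hn).ne',
            if_pos (Nat.dvd_of_mem_divisors hn)]
    _ = _ := Nat.sum_div_divisors N fun d => coeff d (X ^ r * ((1 - X : ℚ⟦X⟧)⁻¹) ^ k)

def choosePoly (k : ℕ) (c : ℚ) : Polynomial ℚ :=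
  Polynomial.C ((k.factorial : ℚ)⁻¹) * (descPochhammer ℚ k).comp (Polynomial.X + Polynomial.C c)

theorem choosePoly_natDegree_lt (k : ℕ) (c : ℚ) : (choosePoly k c).natDegree < k + 1 := by
  refine (Polynomial.natDegree_C_mul_le _ _).trans_lt ?_
  rw [Polynomial.natDegree_comp, descPochhammer_natDegree, Polynomial.natDegree_X_add_C]
  omega

theorem choosePoly_eval {k : ℕ} {c x : ℚ} {m : ℕ} (h : x + c = m) :
    (choosePoly k c).eval x = (m.choose k : ℚ) := by
  simp only [choosePoly, Polynomial.eval_mul, Polynomial.eval_C, Polynomial.eval_comp,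
    Polynomial.eval_add, Polynomial.eval_X, h, descPochhammer_eval_eq_descFactorial,
    Nat.descFactorial_eq_factorial_mul_choose, Nat.cast_mul]
  field_simp

theorem mk_sum_divisors_eval_eq_sum_Gq (P : Polynomial ℚ) {m : ℕ} (hP : P.natDegree < m) :
    (PowerSeries.mk fun N => ∑ d ∈ N.divisors, P.eval (d : ℚ)) =
      ∑ i ∈ range m, P.coeff i • Gq (i + 1) := by
  ext N
  simp only [coeff_mk, map_sum, map_smul, Gq, smul_eq_mul, Nat.add_sub_cancel,
    Polynomial.eval_eq_sum_range' hP, mul_sum]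
  exact sum_comm

theorem Aser_one_mem_eisensteinSpan {k r n : ℕ} (hk : 1 ≤ k) (hrk : r ≤ k) (hkn : k ≤ n) :
    Aser 1 k r ∈ eisensteinSpan n k := by
  obtain ⟨k, rfl⟩ : ∃ k', k = k' + 1 := ⟨k - 1, by omega⟩
  have hA : Aser 1 (k + 1 : ℕ) r =
      PowerSeries.mk fun N => ∑ d ∈ N.divisors, (choosePoly k (k - r)).eval (d : ℚ) := by
    ext N
    rw [coeff_Aser_one, coeff_mk]
    refine sum_congr rfl fun d hd => ?_
    have hd := Nat.pos_of_mem_divisors hd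
    rw [coeff_X_pow_mul_inv_one_sub_X_pow_succ hd hrk, choosePoly_eval]
    push_cast [show r ≤ d + k by omega]
    ring
  rw [hA, mk_sum_divisors_eval_eq_sum_Gq _ (choosePoly_natDegree_lt k _)]
  refine Submodule.sum_mem _ fun i hi => Submodule.smul_mem _ _ ?_
  have hi : i + 1 ≤ k + 1 := mem_range.mp hi
  exact eisensteinSpan.Gq_mem (n := n) ⟨i, by omega⟩ hi

theorem Aser_mem_eisensteinSpan {k r n : ℕ} (hr : 1 ≤ r) (hrk : r ≤ k) (a : ℕ)
    (han : a * k ≤ n) :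
    Aser a k r ∈ eisensteinSpan n (a * k) := by
  induction a using Nat.strong_induction_on with
  | _ a ih =>
  rcases Nat.eq_zero_or_pos a with rfl | ha
  · rw [Aser_zero]
    exact eisensteinSpan.one_mem _ _
  have hsign {W : ℕ} (m : ℕ) {f : ℚ⟦X⟧} (hf : f ∈ eisensteinSpan n W) :
      (-1) ^ m * f ∈ eisensteinSpan n W := by
    rcases neg_one_pow_eq_or ℚ⟦X⟧ m with h | h <;> simp [h, hf]
  have hmem : (a : ℚ⟦X⟧) * Aser a k r ∈ eisensteinSpan n (a * k) := by
    rw [Aser_newton hr]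
    refine hsign _ (Submodule.sum_mem _ fun x hx => ?_)
    obtain ⟨hx, hxa⟩ := mem_filter.mp hx
    rw [HasAntidiagonal.mem_antidiagonal] at hx
    rw [mul_assoc, show a * k = x.1 * k + k * x.2 by rw [← hx]; ring]
    exact hsign _ (eisensteinSpan.mul_mem (ih x.1 hxa (by nlinarith))
      (Aser_one_mem_eisensteinSpan (by nlinarith) (by nlinarith) (by nlinarith)))
  rwa [← nsmul_eq_mul, ← Nat.cast_smul_eq_nsmul ℚ,
    Submodule.smul_mem_iff _ (by positivity)] at hmem

theorem A_polynomial_in_Eisenstein_general (a k r : ℕ) (hr : 1 ≤ r) (hrk : r ≤ k) :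
    ∃ Q : MvPolynomial (Fin (a * k)) ℚ,
      Q.weightedTotalDegree (fun i : Fin (a * k) => (i : ℕ) + 1) ≤ a * k ∧
      Aser a (k : ℤ) r =
        MvPolynomial.aeval (fun i : Fin (a * k) => Gq ((i : ℕ) + 1)) Q :=
  eisensteinSpan.mem_iff.mp (Aser_mem_eisensteinSpan hr hrk a le_rfl)

/-- Proposition 3.1.  For `a, k, r ∈ ℕ` with `1 ≤ r ≤ k`, the series
`𝒜_{a,k,r}` lies in the `ℚ`-subalgebra of `ℚ⟦q⟧` generated by the Eisenstein series
`𝒢_1, …, 𝒢_{ak}`, and can be written as a `ℚ`-linear combination of monomials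
`𝒢_{j₁}⋯𝒢_{j_t}` with `j₁ + ⋯ + j_t ≤ ak`: it is the image under evaluation at
`(𝒢_1, …, 𝒢_{ak})` of a multivariate polynomial whose weighted total degree, with the
variable corresponding to `𝒢_j` given weight `j`, is at most `ak`. -/
theorem A_polynomial_in_Eisenstein (a k r : ℕ) (ha : 1 ≤ a) (hr : 1 ≤ r) (hrk : r ≤ k) :
    ∃ Q : MvPolynomial (Fin (a * k)) ℚ,
      Q.weightedTotalDegree (fun i : Fin (a * k) => (i : ℕ) + 1) ≤ a * k ∧
      Aser a (k : ℤ) r =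
        MvPolynomial.aeval (fun i : Fin (a * k) => Gq ((i : ℕ) + 1)) Q :=
  A_polynomial_in_Eisenstein_general a k r hr hrk
end
end
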